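/- For every ε > 0 there exists N ∈ ℕ such that for every n ∈ ℕ with n ≥ 1 and every minimizer λ̄ of σ(B(·)) over Λ_n, the number of indices i ∈ {0,…,n} for which |λ̄_i − 1| ≥ ε is at most N (i.e., |λ̄_i − 1| < ε for all but at most N indices). -/

import Mathlib

open Real

/-- The `(n+2) × (n+2)` symmetric tridiagonal matrix `B(λ)` with zero diagonal and
entries `λ_{j}^{-1/2}` on the sub/super-diagonals (0-based indexing: the entry in
positions `(i, i+1)` and `(i+1, i)` is `(l i)^{-1/2}` for `i = 0, …, n`). -/
noncomputable def Bmat (n : ℕ) (l : Fin (n+1) → ℝ) :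
    Matrix (Fin (n+2)) (Fin (n+2)) ℝ :=
  Matrix.of fun i j =>
    if h1 : (i : ℕ) + 1 = (j : ℕ) then
      l ⟨(i : ℕ), by have := j.isLt; omega⟩ ^ (-(1/2) : ℝ)
    else if h2 : (j : ℕ) + 1 = (i : ℕ) then
      l ⟨(j : ℕ), by have := i.isLt; omega⟩ ^ (-(1/2) : ℝ)
    else 0

/-- The largest eigenvalue (Perron root) of `B(λ)`. -/
noncomputable def sigmaB (n : ℕ) (l : Fin (n+1) → ℝ) : ℝ :=
  sSup {μ : ℝ | ∃ v : Fin (n+2) → ℝ, v ≠ 0 ∧ (Bmat n l).mulVec v = μ • v}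

/-- The feasible set `Λ_n`: all entries positive and `(1/(n+1)) ∑ λ_i ≤ 1`. -/
def Feasible (n : ℕ) (l : Fin (n+1) → ℝ) : Prop :=
  (∀ i, 0 < l i) ∧ (∑ i, l i) / ((n : ℝ) + 1) ≤ 1

/-- `λ̄` is a minimizer of `σ(B(·))` over `Λ_n`. -/
def IsMinimizer (n : ℕ) (l : Fin (n+1) → ℝ) : Prop :=
  Feasible n l ∧ ∀ m : Fin (n+1) → ℝ, Feasible n m → sigmaB n l ≤ sigmaB n m

/-- A Perron vector of `B(λ)`: positive entries, Euclidean norm one,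
eigenvector for the Perron root. -/
def IsPerronVector (n : ℕ) (l : Fin (n+1) → ℝ) (v : Fin (n+2) → ℝ) : Prop :=
  (∀ i, 0 < v i) ∧ (∑ i, v i ^ 2) = 1 ∧ (Bmat n l).mulVec v = sigmaB n l • v

/-!
Testing the Rayleigh quotient of `B(λ)` on the all-ones vector gives
`2 ∑ λ_i^{-1/2} ≤ σ(B(λ)) (n + 2)`, and a minimizer has `σ(B(λ̄)) ≤ σ(B(1)) ≤ 2`, so
`∑ λ̄_i^{-1/2} ≤ n + 2`. On the other hand the tangent-line bound
`x^{-1/2} ≥ (3 - x)/2 + (√x - 1)²/2` and the budget `∑ λ̄_i ≤ n + 1` give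
`∑ λ̄_i^{-1/2} ≥ n + 1 + ∑ (√λ̄_i - 1)²/2`. Hence `∑ (√λ̄_i - 1)² ≤ 2` uniformly in `n`, and only
boundedly many `λ̄_i` can stay `ε`-far from `1`.
-/

open Matrix Finset

namespace Matrix.IsHermitian

variable {m : Type*} [Fintype m] [DecidableEq m] {A : Matrix m m ℝ}

theorem dotProduct_mulVec_le_sup'_eigenvalues [Nonempty m] (hA : A.IsHermitian) (x : m → ℝ) :
    x ⬝ᵥ A *ᵥ x ≤ univ.sup' univ_nonempty hA.eigenvalues * (x ⬝ᵥ x) := by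
  set U : Matrix m m ℝ := (hA.eigenvectorUnitary : Matrix m m ℝ)
  set y : m → ℝ := star U *ᵥ x
  have hU : U * star U = 1 := Matrix.mem_unitaryGroup_iff.mp hA.eigenvectorUnitary.2
  have hdot (z : m → ℝ) : x ⬝ᵥ U *ᵥ z = y ⬝ᵥ z := by
    rw [dotProduct_mulVec, ← mulVec_transpose]
    simp only [y, star_eq_conjTranspose, conjTranspose_eq_transpose_of_trivial]
  have hquad : x ⬝ᵥ A *ᵥ x = ∑ i, hA.eigenvalues i * (y i * y i) := by
    conv_lhs => rw [hA.spectral_theorem, Unitary.conjStarAlgAut_apply]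
    rw [← mulVec_mulVec, ← mulVec_mulVec, hdot]
    simp only [dotProduct, mulVec_diagonal, Function.comp_apply, RCLike.ofReal_real_eq_id, id]
    exact sum_congr rfl fun i _ => by ring
  have hnorm : x ⬝ᵥ x = y ⬝ᵥ y := by
    simpa [mulVec_mulVec, hU] using hdot (star U *ᵥ x)
  rw [hquad, hnorm, dotProduct, mul_sum]
  exact sum_le_sum fun i _ =>
    mul_le_mul_of_nonneg_right (le_sup' _ (mem_univ i)) (mul_self_nonneg _)

theorem isGreatest_eigenvalues [Nonempty m] (hA : A.IsHermitian) :
    IsGreatest {μ : ℝ | ∃ v : m → ℝ, v ≠ 0 ∧ A *ᵥ v = μ • v}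
      (univ.sup' univ_nonempty hA.eigenvalues) := by
  constructor
  · obtain ⟨i, -, hi⟩ := exists_mem_eq_sup' univ_nonempty hA.eigenvalues
    refine ⟨WithLp.ofLp (hA.eigenvectorBasis i), ?_, hi ▸ hA.mulVec_eigenvectorBasis i⟩
    simpa using hA.eigenvectorBasis.toBasis.ne_zero i
  · rintro μ ⟨v, hv, hμ⟩
    have hpos : 0 < v ⬝ᵥ v := dotProduct_self_star_pos_iff.mpr hv
    have := hA.dotProduct_mulVec_le_sup'_eigenvalues v
    rw [hμ, dotProduct_smul, smul_eq_mul] at this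
    exact le_of_mul_le_mul_right this hpos

theorem dotProduct_mulVec_le_sSup_mul [Nonempty m] (hA : A.IsHermitian) (x : m → ℝ) :
    x ⬝ᵥ A *ᵥ x ≤ sSup {μ : ℝ | ∃ v : m → ℝ, v ≠ 0 ∧ A *ᵥ v = μ • v} * (x ⬝ᵥ x) := by
  rw [hA.isGreatest_eigenvalues.csSup_eq]
  exact hA.dotProduct_mulVec_le_sup'_eigenvalues x

theorem sSup_le_of_dotProduct_mulVec_le [Nonempty m] (hA : A.IsHermitian) {c : ℝ}
    (hc : ∀ x, x ⬝ᵥ A *ᵥ x ≤ c * (x ⬝ᵥ x)) :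
    sSup {μ : ℝ | ∃ v : m → ℝ, v ≠ 0 ∧ A *ᵥ v = μ • v} ≤ c := by
  rw [hA.isGreatest_eigenvalues.csSup_eq]
  obtain ⟨v, hv, hμ⟩ := hA.isGreatest_eigenvalues.1
  have := hc v
  rw [hμ, dotProduct_smul, smul_eq_mul] at this
  exact le_of_mul_le_mul_right this (dotProduct_self_star_pos_iff.mpr hv)

end Matrix.IsHermitian

theorem Finset.card_filter_le_ceil_div {ι : Type*} (s : Finset ι) {f : ι → ℝ}
    (hf : ∀ i ∈ s, 0 ≤ f i) {η C : ℝ} (hη : 0 < η) (hC : ∑ i ∈ s, f i ≤ C) :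
    #{i ∈ s | η ≤ f i} ≤ ⌈C / η⌉₊ := by
  have hcard : #{i ∈ s | η ≤ f i} * η ≤ C :=
    calc #{i ∈ s | η ≤ f i} * η ≤ ∑ i ∈ s with η ≤ f i, f i := by
          simpa using card_nsmul_le_sum _ f η fun i hi => (mem_filter.mp hi).2
      _ ≤ ∑ i ∈ s, f i := sum_le_sum_of_subset_of_nonneg (filter_subset _ _)
          fun i hi _ => hf i hi
      _ ≤ C := hC
  exact_mod_cast (le_div_iff₀ hη).mpr hcard |>.trans (Nat.le_ceil _)

theorem sq_sqrt_sub_one_div_two_le {x : ℝ} (hx : 0 < x) :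
    (√x - 1) ^ 2 / 2 ≤ x ^ (-(1/2) : ℝ) - (3 - x) / 2 := by
  obtain ⟨s, hs, rfl⟩ : ∃ s, 0 < s ∧ x = s ^ 2 := ⟨√x, by positivity, (sq_sqrt hx.le).symm⟩
  rw [Real.rpow_neg hx.le, ← Real.sqrt_eq_rpow, Real.sqrt_sq hs.le]
  have hgap : s⁻¹ - (3 - s ^ 2) / 2 - (s - 1) ^ 2 / 2 = (s - 1) ^ 2 / s := by
    field_simp
    ring
  have : 0 ≤ (s - 1) ^ 2 / s := by positivity
  linarith

theorem sq_min_one_div_three_le_sq_sqrt_sub_one {ε x : ℝ} (hε : 0 < ε) (hx : 0 ≤ x)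
    (h : ε ≤ |x - 1|) :
    (min ε 1 / 3) ^ 2 ≤ (√x - 1) ^ 2 := by
  obtain ⟨s, hs, rfl⟩ : ∃ s, 0 ≤ s ∧ x = s ^ 2 := ⟨√x, by positivity, (sq_sqrt hx).symm⟩
  rw [Real.sqrt_sq hs]
  set c := min ε 1 / 3 with hc_def
  have hc : 0 < c := by positivity
  have hc1 : c ≤ 1 / 3 := by have := min_le_right ε 1; linarith
  have hcε : 3 * c ≤ ε := by have := min_le_left ε 1; linarith
  by_contra! hlt
  have hs1 : |s - 1| < c := abs_lt_of_sq_lt_sq hlt hc.le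
  have hfactor : |s ^ 2 - 1| = |s - 1| * (s + 1) := by
    rw [show s ^ 2 - 1 = (s - 1) * (s + 1) by ring, abs_mul,
      abs_of_pos (show 0 < s + 1 by linarith)]
  have hs2 : s + 1 < 3 := by linarith [le_abs_self (s - 1)]
  nlinarith [abs_nonneg (s - 1)]

section Bmat

variable (n : ℕ) (l : Fin (n+1) → ℝ)

theorem Bmat_isHermitian : (Bmat n l).IsHermitian := by
  ext i j
  simp only [conjTranspose_apply, Bmat, of_apply, star_trivial]
  split_ifs <;> first | rfl | omega

theorem dotProduct_Bmat_mulVec (v : Fin (n+2) → ℝ) :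
    v ⬝ᵥ Bmat n l *ᵥ v = 2 * ∑ k, l k ^ (-(1/2) : ℝ) * (v k.castSucc * v k.succ) := by
  set u : Fin (n+2) → Fin (n+2) → ℝ := fun i j =>
    if h : (i : ℕ) + 1 = j then l ⟨i, by omega⟩ ^ (-(1/2) : ℝ) * (v i * v j) else 0
  have hentry (i j) : v i * (Bmat n l i j * v j) = u i j + u j i := by
    simp only [u, Bmat, of_apply]
    split_ifs <;> first | omega | ring
  have hu : ∑ i, ∑ j, u i j = ∑ k, l k ^ (-(1/2) : ℝ) * (v k.castSucc * v k.succ) := by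
    have hrow (k : Fin (n+1)) :
        ∑ j, u k.castSucc j = l k ^ (-(1/2) : ℝ) * (v k.castSucc * v k.succ) := by
      rw [sum_eq_single_of_mem k.succ (mem_univ _)]
      · simp [u]
      · intro j _ hj
        refine dif_neg fun h => hj (Fin.ext ?_)
        simp only [Fin.val_castSucc, Fin.val_succ] at h ⊢
        omega
    have hlast : ∑ j, u (Fin.last (n+1)) j = 0 :=
      sum_eq_zero fun j _ => dif_neg (by simp; omega)
    rw [Fin.sum_univ_castSucc, hlast, add_zero]
    exact sum_congr rfl fun k _ => hrow k
  calc v ⬝ᵥ Bmat n l *ᵥ v = ∑ i, ∑ j, (u i j + u j i) := by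
        simp only [dotProduct, mulVec, mul_sum, hentry]
    _ = 2 * ∑ k, l k ^ (-(1/2) : ℝ) * (v k.castSucc * v k.succ) := by
        rw [← hu]; simp only [sum_add_distrib]; rw [sum_comm (f := fun i j => u j i)]; ring

theorem dotProduct_Bmat_mulVec_le_sigmaB (x : Fin (n+2) → ℝ) :
    x ⬝ᵥ Bmat n l *ᵥ x ≤ sigmaB n l * (x ⬝ᵥ x) :=
  (Bmat_isHermitian n l).dotProduct_mulVec_le_sSup_mul x

theorem sigmaB_one_le_two : sigmaB n (fun _ => 1) ≤ 2 := by
  refine (Bmat_isHermitian n _).sSup_le_of_dotProduct_mulVec_le fun v => ?_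
  have hamgm : ∀ k : Fin (n+1),
      2 * (v k.castSucc * v k.succ) ≤ v k.castSucc * v k.castSucc + v k.succ * v k.succ :=
    fun k => by nlinarith [sq_nonneg (v k.castSucc - v k.succ)]
  have hends : ∑ k : Fin (n+1), (v k.castSucc * v k.castSucc + v k.succ * v k.succ)
      = 2 * (v ⬝ᵥ v) - v (Fin.last _) * v (Fin.last _) - v 0 * v 0 := by
    have hinit := Fin.sum_univ_castSucc fun i => v i * v i
    have htail := Fin.sum_univ_succ fun i => v i * v i
    rw [sum_add_distrib, dotProduct]
    linarith
  calc v ⬝ᵥ Bmat n (fun _ => 1) *ᵥ v = ∑ k : Fin (n+1), 2 * (v k.castSucc * v k.succ) := by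
        simp [dotProduct_Bmat_mulVec, mul_sum]
    _ ≤ 2 * (v ⬝ᵥ v) := by
        grw [sum_le_sum fun k _ => hamgm k, hends]
        nlinarith [mul_self_nonneg (v (Fin.last _)), mul_self_nonneg (v 0)]

theorem feasible_one : Feasible n (fun _ => 1) := by
  refine ⟨fun _ => one_pos, ?_⟩
  rw [div_le_one (by positivity)]
  simp

variable {n l}

theorem sum_rpow_neg_half_le_of_isMinimizer (hl : IsMinimizer n l) :
    ∑ i, l i ^ (-(1/2) : ℝ) ≤ n + 2 := by
  have hσ : sigmaB n l ≤ 2 := (hl.2 _ (feasible_one n)).trans (sigmaB_one_le_two n)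
  have h := dotProduct_Bmat_mulVec_le_sigmaB n l (fun _ => 1)
  simp only [dotProduct_Bmat_mulVec, mul_one] at h
  have hones : ((fun _ => 1 : Fin (n+2) → ℝ) ⬝ᵥ fun _ => 1) = n + 2 := by
    simp [dotProduct]
  rw [hones] at h
  nlinarith

end Bmat

theorem sum_sq_sqrt_sub_one_le_two_of_isMinimizer {n : ℕ} {l : Fin (n+1) → ℝ}
    (hl : IsMinimizer n l) : ∑ i, (√(l i) - 1) ^ 2 ≤ 2 := by
  obtain ⟨hpos, hmean⟩ := hl.1
  have hsum : ∑ i, l i ≤ n + 1 := by rwa [div_le_one (by positivity)] at hmean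
  have hpt := sum_le_sum fun i (_ : i ∈ univ) => sq_sqrt_sub_one_div_two_le (hpos i)
  have htangent : ∑ i, (3 - l i) / 2 = (3 * (n + 1) - ∑ i, l i) / 2 := by
    simp [← sum_div, sum_sub_distrib, mul_comm]
  rw [← sum_div, sum_sub_distrib, htangent] at hpt
  linarith [sum_rpow_neg_half_le_of_isMinimizer hl]

/-- the turnpike property. For every `ε > 0` there is `N` such that for
every `n ≥ 1` and every minimizer `λ̄`, at most `N` indices satisfy `|λ̄_i - 1| ≥ ε`. -/
theorem stmt_18 :
    ∀ ε : ℝ, 0 < ε → ∃ N : ℕ, ∀ n : ℕ, 1 ≤ n →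
      ∀ l : Fin (n+1) → ℝ, IsMinimizer n l →
        (Finset.univ.filter fun i : Fin (n+1) => ε ≤ |l i - 1|).card ≤ N := by
  intro ε hε
  refine ⟨⌈2 / (min ε 1 / 3) ^ 2⌉₊, fun n _ l hl => ?_⟩
  calc #{i | ε ≤ |l i - 1|} ≤ #{i | (min ε 1 / 3) ^ 2 ≤ (√(l i) - 1) ^ 2} :=
        card_le_card <| monotone_filter_right _ fun i _ =>
          sq_min_one_div_three_le_sq_sqrt_sub_one hε (hl.1.1 i).le
    _ ≤ ⌈2 / (min ε 1 / 3) ^ 2⌉₊ :=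
        card_filter_le_ceil_div _ (fun i _ => sq_nonneg _) (by positivity)
          (sum_sq_sqrt_sub_one_le_two_of_isMinimizer hl)
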